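/- arXiv:0910.2349 — 5 statements merged into one kernel-verified Lean document; each statement's English description precedes it below -/
import Mathlib

section
/- Let K = ℚ(m) be the field of rational functions in one variable m over ℚ, and let W be the Weierstrass curve over the polynomial ring K[t] given by y² = x³ + (t² + m·t + 3)x² + (2t + 3)x + 1 (i.e. a₁ = 0, a₂ = t² + m·t + 3, a₃ = 0, a₄ = 2t + 3, a₆ = 1). Then there exists a nonzero constant c ∈ K such that the discriminant of W, as a polynomial in t, satisfies Δ = c · t² · (4(m−3)t³ + (8m² − 24m + 3)t² + (4m³ − 12m² + 30m − 76)t + 27m² − 108m + 108), and moreover t divides the invariant c₄ of W in K[t]. -/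
open Polynomial

/- The curve has `a₁ = a₃ = 0`, so `Δ = 16 · disc(x³ + a₂x² + a₄x + a₆)` and `c₄ = 16(a₂² − 3a₄)`;
expanding the discriminant gives `−16 t²` times the cubic. At `t = 0` we have `a₂ = a₄ = 3`, so
`c₄(0) = 16(9 − 9) = 0`, which is the divisibility by `t`. -/

/-- The family of rational elliptic surfaces with configuration [1,1,1,7,II]:
`y² = x³ + (t² + m·t + 3)x² + (2t + 3)x + 1` over `ℚ(m)[t]`.  Its discriminant is, up to a
nonzero constant, `t²` times the displayed cubic in `t`, and `t` divides `c₄`. -/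
theorem stmt_0 :
    let K := RatFunc ℚ
    let m : Polynomial K := Polynomial.C RatFunc.X
    let t : Polynomial K := Polynomial.X
    let W : WeierstrassCurve (Polynomial K) :=
      { a₁ := 0
        a₂ := t ^ 2 + m * t + 3
        a₃ := 0
        a₄ := 2 * t + 3
        a₆ := 1 }
    (∃ c : K, c ≠ 0 ∧
      W.Δ = Polynomial.C c * t ^ 2 *
        (4 * (m - 3) * t ^ 3 + (8 * m ^ 2 - 24 * m + 3) * t ^ 2 +
          (4 * m ^ 3 - 12 * m ^ 2 + 30 * m - 76) * t + (27 * m ^ 2 - 108 * m + 108))) ∧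
    t ∣ W.c₄ := by
  intro K m t W
  have : W.IsCharNeTwoNF := ⟨rfl, rfl⟩
  refine ⟨⟨-16, by norm_num, ?_⟩, ?_⟩
  · rw [W.Δ_of_isCharNeTwoNF, C_neg, C_ofNat]
    simp only [W]
    ring
  · rw [X_dvd_iff, coeff_zero_eq_eval_zero, W.c₄_of_isCharNeTwoNF]
    simp only [W, t, eval_sub, eval_mul, eval_add, eval_pow, eval_X, eval_ofNat]
    norm_num
end

section
/- Let K = ℚ(m) be the field of rational functions in one variable m over ℚ, and let W be the Weierstrass curve over the polynomial ring K[t] given by y² = x³ + (t² + 3t + 3m)x² + ((3m − 1)t + 3m²)x + m³ (i.e. a₁ = 0, a₂ = t² + 3t + 3m, a₃ = 0, a₄ = (3m−1)t + 3m², a₆ = m³). Then there exists a nonzero constant c ∈ K such that the discriminant of W, as a polynomial in t, satisfies Δ = c · t² · ((m−1)t − 1)² · ((4m − 1)t² + (18m − 4)t + 27m²), and moreover t divides the invariant c₄ of W in K[t]. -/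
open Polynomial

/-- The family of rational elliptic surfaces with configuration [1,1,2,6,II]:
`y² = x³ + (t² + 3t + 3m)x² + ((3m−1)t + 3m²)x + m³` over `ℚ(m)[t]`.  Its discriminant is,
up to a nonzero constant, `t² · ((m−1)t − 1)²` times the displayed quadratic in `t`, and
`t` divides `c₄`. -/
theorem stmt_1 :
    let K := RatFunc ℚ
    let m : Polynomial K := Polynomial.C RatFunc.X
    let t : Polynomial K := Polynomial.X
    let W : WeierstrassCurve (Polynomial K) :=
      { a₁ := 0
        a₂ := t ^ 2 + 3 * t + 3 * m
        a₃ := 0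
        a₄ := (3 * m - 1) * t + 3 * m ^ 2
        a₆ := m ^ 3 }
    (∃ c : K, c ≠ 0 ∧
      W.Δ = Polynomial.C c * t ^ 2 * ((m - 1) * t - 1) ^ 2 *
        ((4 * m - 1) * t ^ 2 + (18 * m - 4) * t + 27 * m ^ 2)) ∧
    t ∣ W.c₄ := by
  intro K m t W
  have : W.IsCharNeTwoNF := ⟨rfl, rfl⟩
  refine ⟨⟨-16, by norm_num, ?_⟩, ⟨16 * (t ^ 3 + 6 * t ^ 2 + (6 * m + 9) * t + 9 * m + 3), ?_⟩⟩
  · rw [WeierstrassCurve.Δ_of_isCharNeTwoNF, C_neg, C_ofNat]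
    ring
  -- `c₄ = 16 (a₂² - 3 a₄)`, and at `t = 0` both `a₂²` and `3 a₄` equal `9 m²`.
  · rw [WeierstrassCurve.c₄_of_isCharNeTwoNF]
    ring
end

section
/- Let K = ℚ(m) be the field of rational functions in one variable m over ℚ, and let W be the Weierstrass curve over the polynomial ring K[t] given by y² + (m·t − 27m + 18)xy + 16t·y = x³ + t·x² (i.e. a₁ = m·t − 27m + 18, a₂ = t, a₃ = 16t, a₄ = 0, a₆ = 0). Then there exists a nonzero constant c ∈ K such that the discriminant of W, as a polynomial in t, satisfies Δ = c · t³ · (t − 27)² · (m⁴t² − 2m²(27m² − 28m − 4)t + (27m − 2)(3m − 2)³), and moreover (t − 27) divides the invariant c₄ of W in K[t]. -/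
open Polynomial

/-! Both claims are polynomial identities with integer coefficients in `m` and `t`, so they hold
for the family over `R[t]` with `m` in an arbitrary commutative ring `R`; the constant is `-256`,
which is nonzero over `ℚ(m)`. -/

namespace WeierstrassCurve

variable {R : Type*} [CommRing R]

noncomputable def familyI₃I₅II (m : R) : WeierstrassCurve R[X] where
  a₁ := C m * X - 27 * C m + 18
  a₂ := X
  a₃ := 16 * X
  a₄ := 0
  a₆ := 0

theorem familyI₃I₅II_Δ (m : R) :
    (familyI₃I₅II m).Δ = -256 * X ^ 3 * (X - 27) ^ 2 *
      (C m ^ 4 * X ^ 2 - 2 * C m ^ 2 * (27 * C m ^ 2 - 28 * C m - 4) * X +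
        (27 * C m - 2) * (3 * C m - 2) ^ 3) := by
  simp only [Δ, b₂, b₄, b₆, b₈, familyI₃I₅II]
  ring

theorem familyI₃I₅II_c₄ (m : R) :
    (familyI₃I₅II m).c₄ = (X - 27) * (C m ^ 4 * X ^ 3 + (-81 * C m ^ 4 + 72 * C m ^ 3 +
      8 * C m ^ 2) * X ^ 2 + (2187 * C m ^ 4 - 3888 * C m ^ 3 + 1728 * C m ^ 2 - 96 * C m + 16) * X +
      (-19683 * C m ^ 4 + 52488 * C m ^ 3 - 52488 * C m ^ 2 + 23328 * C m - 3888)) := by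
  simp only [c₄, b₂, b₄, familyI₃I₅II]
  ring

theorem X_sub_27_dvd_familyI₃I₅II_c₄ (m : R) : X - 27 ∣ (familyI₃I₅II m).c₄ :=
  (familyI₃I₅II_c₄ m).symm ▸ dvd_mul_right _ _

end WeierstrassCurve

open WeierstrassCurve in
/-- The family of rational elliptic surfaces with configuration [1,1,3,5,II]:
`y² + (mt − 27m + 18)xy + 16t·y = x³ + t·x²` over `ℚ(m)[t]`.  Its discriminant is, up to a
nonzero constant, `t³ · (t − 27)²` times the displayed quadratic in `t`, and `t − 27`
divides `c₄`. -/
theorem stmt_2 :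
    let K := RatFunc ℚ
    let m : Polynomial K := Polynomial.C RatFunc.X
    let t : Polynomial K := Polynomial.X
    let W : WeierstrassCurve (Polynomial K) :=
      { a₁ := m * t - 27 * m + 18
        a₂ := t
        a₃ := 16 * t
        a₄ := 0
        a₆ := 0 }
    (∃ c : K, c ≠ 0 ∧
      W.Δ = Polynomial.C c * t ^ 3 * (t - 27) ^ 2 *
        (m ^ 4 * t ^ 2 - 2 * m ^ 2 * (27 * m ^ 2 - 28 * m - 4) * t +
          (27 * m - 2) * (3 * m - 2) ^ 3)) ∧
    (t - 27) ∣ W.c₄ := by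
  intro K m t W
  have hW : W = familyI₃I₅II RatFunc.X := rfl
  refine ⟨⟨-256, by norm_num, ?_⟩, hW ▸ X_sub_27_dvd_familyI₃I₅II_c₄ _⟩
  rw [hW, familyI₃I₅II_Δ, C_neg, C_ofNat]
end

section
/- Let K = ℚ(m) be the field of rational functions in one variable m over ℚ, and let W be the Weierstrass curve over the polynomial ring K[t] given by y² + (m(m+8)t + 1 − m)xy + (27/4)m²t((m+8)t − 1)·y = x³ + (27/4)m·t·x² (i.e. a₁ = m(m+8)t + 1 − m, a₂ = (27/4)mt, a₃ = (27/4)m²t((m+8)t − 1), a₄ = 0, a₆ = 0). Then there exists a nonzero constant c ∈ K such that the discriminant of W, as a polynomial in t, satisfies Δ = c · t³ · ((m+8)t − 1)² · (mt − 1)² · (m(4m+5)(m+8)²·t − 4(m−1)³), and moreover (mt − 1) divides the invariant c₄ of W in K[t]. -/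
open Polynomial

/-- The family of rational elliptic surfaces with configuration [1,2,3,4,II]:
`y² + (m(m+8)t + 1 − m)xy + (27/4)m²t((m+8)t − 1)y = x³ + (27/4)mt·x²` over `ℚ(m)[t]`.
Its discriminant is, up to a nonzero constant,
`t³ · ((m+8)t − 1)² · (mt − 1)² · (m(4m+5)(m+8)²t − 4(m−1)³)`, and `mt − 1` divides `c₄`. -/
theorem stmt_3 :
    let K := RatFunc ℚ
    let m : Polynomial K := Polynomial.C RatFunc.X
    let t : Polynomial K := Polynomial.X
    let W : WeierstrassCurve (Polynomial K) :=
      { a₁ := m * (m + 8) * t + 1 - m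
        a₂ := Polynomial.C (27 / 4 : RatFunc ℚ) * m * t
        a₃ := Polynomial.C (27 / 4 : RatFunc ℚ) * m ^ 2 * t * ((m + 8) * t - 1)
        a₄ := 0
        a₆ := 0 }
    (∃ c : K, c ≠ 0 ∧
      W.Δ = Polynomial.C c * t ^ 3 * ((m + 8) * t - 1) ^ 2 * (m * t - 1) ^ 2 *
        (m * (4 * m + 5) * (m + 8) ^ 2 * t - 4 * (m - 1) ^ 3)) ∧
    (m * t - 1) ∣ W.c₄ := by
  intro K m t W
  haveI : CharZero K := charZero_of_injective_algebraMap (RatFunc.algebraMap_injective ℚ)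
  haveI : Infinite K := CharZero.infinite K
  constructor
  · refine ⟨-(19683 / 256) * RatFunc.X ^ 5, ?_, ?_⟩
    · exact mul_ne_zero (by norm_num) (pow_ne_zero _ RatFunc.X_ne_zero)
    · apply Polynomial.funext
      intro x
      simp only [W, m, t, WeierstrassCurve.Δ, WeierstrassCurve.b₂, WeierstrassCurve.b₄,
        WeierstrassCurve.b₆, WeierstrassCurve.b₈, eval_mul, eval_add, eval_sub, eval_pow,
        eval_C, eval_X, eval_one, eval_ofNat, eval_neg, eval_zero]
      ring
  · refine ⟨-(m - 1) ^ 4 +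
      Polynomial.C (3 * RatFunc.X ^ 5 + 24 * RatFunc.X ^ 4 + 18 * RatFunc.X ^ 3 +
        42 * RatFunc.X ^ 2 - 87 * RatFunc.X) * t -
      Polynomial.C (3 * RatFunc.X ^ 6 + 60 * RatFunc.X ^ 5 + 396 * RatFunc.X ^ 4 +
        960 * RatFunc.X ^ 3 + 768 * RatFunc.X ^ 2) * t ^ 2 +
      m ^ 3 * (m + 8) ^ 4 * t ^ 3, ?_⟩
    apply Polynomial.funext
    intro x
    simp only [W, m, t, WeierstrassCurve.c₄, WeierstrassCurve.b₂, WeierstrassCurve.b₄,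
      eval_mul, eval_add, eval_sub, eval_pow, eval_C, eval_X, eval_one, eval_ofNat,
      eval_neg, eval_zero]
    ring
end

section
/- Let K = ℚ(√−7) be the quadratic field obtained by adjoining to ℚ a square root of −7, and let ω = ((1 − √−7)/(1 + √−7))⁷ ∈ K. Then the field norm N_{K/ℚ}(ω − 3/128) = (11·757)/2¹³ = 8327/8192, and both 11 and 757 are prime. -/
/-!
Since `s² = -7`, one has `(1 - s)/(1 + s) = (-3 - s)/4`, and expanding the seventh power gives
`ω - 3/128 = -93/256 + (91/256)·s`. As `-7` is not a square in `ℚ`, `{1, s}` is a `ℚ`-basis of `K`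
in which multiplication by `a + b·s` has matrix `[[a, d·b], [b, a]]` (with `d = s²`), so its norm
is `a² - d·b² = (93² + 7·91²)/2¹⁶ = 11·757/2¹³`.
-/

section QuadraticNorm

variable {F K : Type*} [Field F] [Field K] [Algebra F K] {s : K} {d : F}

theorem linearIndependent_one_of_sq_eq_algebraMap (hs : s ^ 2 = algebraMap F K d)
    (hd : ¬IsSquare d) : LinearIndependent F ![(1 : K), s] := by
  rw [LinearIndependent.pair_iff' one_ne_zero]
  rintro a rfl
  refine hd ⟨a, (algebraMap F K).injective ?_⟩
  rw [← hs, Algebra.smul_def, mul_one, map_mul, sq]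

theorem Algebra.norm_algebraMap_add_smul_of_sq_eq (hdim : Module.finrank F K = 2)
    (hs : s ^ 2 = algebraMap F K d) (hd : ¬IsSquare d) (a b : F) :
    Algebra.norm F (algebraMap F K a + b • s) = a ^ 2 - d * b ^ 2 := by
  let B := basisOfLinearIndependentOfCardEqFinrank
    (linearIndependent_one_of_sq_eq_algebraMap hs hd) (by simp [hdim])
  have hB0 : B 0 = 1 := by simp [B, coe_basisOfLinearIndependentOfCardEqFinrank]
  have hB1 : B 1 = s := by simp [B, coe_basisOfLinearIndependentOfCardEqFinrank]
  have hmul0 : (algebraMap F K a + b • s) * B 0 = a • B 0 + b • B 1 := by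
    rw [hB0, hB1, mul_one, Algebra.algebraMap_eq_smul_one]
  have hmul1 : (algebraMap F K a + b • s) * B 1 = (d * b) • B 0 + a • B 1 := by
    simp only [hB0, hB1, Algebra.smul_def, mul_one, map_mul, ← hs]
    ring
  rw [Algebra.norm_eq_matrix_det B, Matrix.det_fin_two]
  simp only [Algebra.leftMulMatrix_eq_repr_mul, hmul0, hmul1, map_add, map_smul, B.repr_self,
    Finsupp.smul_single, Finsupp.add_apply, Finsupp.single_apply, smul_eq_mul, mul_one,
    Fin.zero_lt_one.ne, Fin.zero_lt_one.ne', ↓reduceIte]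
  ring

end QuadraticNorm

theorem one_sub_div_one_add_pow_seven_sub_eq {K : Type*} [Field K] [Algebra ℚ K] {s : K} (hs : s ^ 2 = -7) :
    ((1 - s) / (1 + s)) ^ 7 - 3 / 128 = algebraMap ℚ K (-93 / 256) + (91 / 256 : ℚ) • s := by
  have : CharZero K := charZero_of_injective_algebraMap (algebraMap ℚ K).injective
  have hs1 : 1 + s ≠ 0 := by
    intro h
    have : (8 : K) = 0 := by linear_combination (1 - s) * h + hs
    norm_num at this
  have hfrac : (1 - s) / (1 + s) = (-3 - s) / 4 := by
    rw [div_eq_div_iff hs1 (by norm_num)]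
    linear_combination hs
  have hpow : (-3 - s) ^ 7 = -5568 + 5824 * s := by
    linear_combination (483 - 1561 * s - 798 * s ^ 2 - 182 * s ^ 3 - 21 * s ^ 4 - s ^ 5) * hs
  rw [hfrac, div_pow, hpow, Algebra.smul_def]
  simp only [map_div₀, map_neg, map_ofNat]
  ring

theorem stmt_16_general (K : Type*) [Field K] [Algebra ℚ K]
    (hdim : Module.finrank ℚ K = 2) (s : K) (hs : s ^ 2 = -7) :
    Algebra.norm ℚ (((1 - s) / (1 + s)) ^ 7 - 3 / 128) = 11 * 757 / 2 ^ 13 ∧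
    (11 * 757 : ℚ) / 2 ^ 13 = 8327 / 8192 ∧
    Nat.Prime 11 ∧ Nat.Prime 757 := by
  have hs' : s ^ 2 = algebraMap ℚ K (-7) := by simpa using hs
  have hnsq : ¬IsSquare (-7 : ℚ) := fun ⟨r, hr⟩ => by nlinarith [mul_self_nonneg r]
  refine ⟨?_, by norm_num, by norm_num, by norm_num⟩
  rw [one_sub_div_one_add_pow_seven_sub_eq hs, Algebra.norm_algebraMap_add_smul_of_sq_eq hdim hs' hnsq]
  norm_num

/-- In `K = ℚ(√−7)` with `ω = ((1 − s)/(1 + s))⁷`, the field norm satisfies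
`N(ω − 3/128) = 11·757/2¹³ = 8327/8192`, and both 11 and 757 are prime. -/
theorem stmt_16 (K : Type*) [Field K] [Algebra ℚ K] [FiniteDimensional ℚ K]
    (hdim : Module.finrank ℚ K = 2) (s : K) (hs : s ^ 2 = -7) :
    Algebra.norm ℚ (((1 - s) / (1 + s)) ^ 7 - 3 / 128) = 11 * 757 / 2 ^ 13 ∧
    (11 * 757 : ℚ) / 2 ^ 13 = 8327 / 8192 ∧
    Nat.Prime 11 ∧ Nat.Prime 757 :=
  stmt_16_general K hdim s hs
end
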